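/- There exists a nonzero rational number C₁ such that, in U(𝔤): (E₁₀F₃₁)_L(a) = C₁·H₁₀; moreover (E₁₀²F₃₁²)_L(b) ≡ 0 (mod U(𝔤)𝔫₊) and (E₁₀³F₃₁³)_L(c) ≡ 0 (mod U(𝔤)𝔫₊). -/

import Mathlib

/-- The canonical embedding of a Lie algebra into its universal enveloping algebra. -/
noncomputable def ιU {L : Type*} [LieRing L] [LieAlgebra ℂ L] (x : L) :
    UniversalEnvelopingAlgebra ℂ L :=
  UniversalEnvelopingAlgebra.ι ℂ x

/-- The adjoint action `X_L : f ↦ Xf − fX` of `X ∈ L` on `U(L)`. -/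
noncomputable def adU {L : Type*} [LieRing L] [LieAlgebra ℂ L] (x : L)
    (f : UniversalEnvelopingAlgebra ℂ L) : UniversalEnvelopingAlgebra ℂ L :=
  ιU x * f - f * ιU x

/-- A Lie algebra over `ℂ` equipped with Chevalley generators of type `G₂`:
`E₁₀, F₁₀, H₁₀` correspond to the short simple root `α` and `E₀₁, F₀₁, H₀₁` to the long
simple root `β`, subject to the Chevalley relations and the Serre relations, and the
generators generate the Lie algebra.  (By Serre's theorem such a Lie algebra is a quotient of
the simple Lie algebra of type `G₂`.) -/
structure G2Gens (L : Type*) [LieRing L] [LieAlgebra ℂ L] where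
  E10 : L
  E01 : L
  F10 : L
  F01 : L
  H10 : L
  H01 : L
  hH10H01 : ⁅H10, H01⁆ = 0
  hE10F10 : ⁅E10, F10⁆ = H10
  hE01F01 : ⁅E01, F01⁆ = H01
  hE10F01 : ⁅E10, F01⁆ = 0
  hE01F10 : ⁅E01, F10⁆ = 0
  hH10E10 : ⁅H10, E10⁆ = (2 : ℂ) • E10
  hH01E01 : ⁅H01, E01⁆ = (2 : ℂ) • E01
  hH10E01 : ⁅H10, E01⁆ = (-3 : ℂ) • E01
  hH01E10 : ⁅H01, E10⁆ = (-1 : ℂ) • E10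
  hH10F10 : ⁅H10, F10⁆ = (-2 : ℂ) • F10
  hH01F01 : ⁅H01, F01⁆ = (-2 : ℂ) • F01
  hH10F01 : ⁅H10, F01⁆ = (3 : ℂ) • F01
  hH01F10 : ⁅H01, F10⁆ = (1 : ℂ) • F10
  serreE1 : ⁅E10, ⁅E10, ⁅E10, ⁅E10, E01⁆⁆⁆⁆ = 0
  serreE2 : ⁅E01, ⁅E01, E10⁆⁆ = 0
  serreF1 : ⁅F10, ⁅F10, ⁅F10, ⁅F10, F01⁆⁆⁆⁆ = 0
  serreF2 : ⁅F01, ⁅F01, F10⁆⁆ = 0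
  generates : LieSubalgebra.lieSpan ℂ L {E10, E01, F10, F01, H10, H01} = ⊤

namespace G2Gens

variable {L : Type*} [LieRing L] [LieAlgebra ℂ L] (g : G2Gens L)

/-- The root vector `E₁₁ = [E₁₀, E₀₁]`. -/
def E11 : L := ⁅g.E10, g.E01⁆
/-- The root vector `E₂₁ = (1/2)[E₁₁, E₁₀]`. -/
noncomputable def E21 : L := (2 : ℂ)⁻¹ • ⁅g.E11, g.E10⁆
/-- The root vector `E₃₁ = (1/3)[E₂₁, E₁₀]`. -/
noncomputable def E31 : L := (3 : ℂ)⁻¹ • ⁅g.E21, g.E10⁆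
/-- The root vector `E₃₂ = [E₃₁, E₀₁]`. -/
noncomputable def E32 : L := ⁅g.E31, g.E01⁆
/-- The root vector `F₁₁ = [F₀₁, F₁₀]`. -/
def F11 : L := ⁅g.F01, g.F10⁆
/-- The root vector `F₂₁ = (1/2)[F₁₀, F₁₁]`. -/
noncomputable def F21 : L := (2 : ℂ)⁻¹ • ⁅g.F10, g.F11⁆
/-- The root vector `F₃₁ = (1/3)[F₁₀, F₂₁]`. -/
noncomputable def F31 : L := (3 : ℂ)⁻¹ • ⁅g.F10, g.F21⁆
/-- The root vector `F₃₂ = [F₀₁, F₃₁]`. -/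
noncomputable def F32 : L := ⁅g.F01, g.F31⁆
/-- The coroot `H₁₁ = H₁₀ + 3H₀₁`. -/
def H11 : L := g.H10 + (3 : ℂ) • g.H01
/-- The coroot `H₂₁ = 2H₁₀ + 3H₀₁`. -/
def H21 : L := (2 : ℂ) • g.H10 + (3 : ℂ) • g.H01
/-- The coroot `H₃₁ = H₁₀ + H₀₁`. -/
def H31 : L := g.H10 + g.H01
/-- The coroot `H₃₂ = H₁₀ + 2H₀₁`. -/
def H32 : L := g.H10 + (2 : ℂ) • g.H01

/-- The element `a = E₂₁` of `U(𝔤)`. -/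
noncomputable def aU : UniversalEnvelopingAlgebra ℂ L := ιU g.E21
/-- The element `b = E₃₁E₁₁ − E₃₂E₁₀` of `U(𝔤)`. -/
noncomputable def bU : UniversalEnvelopingAlgebra ℂ L :=
  ιU g.E31 * ιU g.E11 - ιU g.E32 * ιU g.E10
/-- The element `c = E₃₁²E₀₁ − E₃₂E₃₁H₀₁ − E₃₂²F₀₁` of `U(𝔤)`. -/
noncomputable def cU : UniversalEnvelopingAlgebra ℂ L :=
  ιU g.E31 * ιU g.E31 * ιU g.E01 - ιU g.E32 * ιU g.E31 * ιU g.H01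
    - ιU g.E32 * ιU g.E32 * ιU g.F01
/-- The element `u = (1/3)a² − b` of `U(𝔤)`. -/
noncomputable def uU : UniversalEnvelopingAlgebra ℂ L :=
  (3 : ℂ)⁻¹ • (g.aU * g.aU) - g.bU
/-- The element `v = (2/9)a³ − ab − 3c` of `U(𝔤)`. -/
noncomputable def vU : UniversalEnvelopingAlgebra ℂ L :=
  ((2 : ℂ) / 9) • (g.aU * g.aU * g.aU) - g.aU * g.bU - (3 : ℂ) • g.cU

/-- `f ≡ h (mod U(𝔤)𝔫₊)`:  `f − h` lies in the left ideal of `U(𝔤)` generated by `E₁₀`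
and `E₀₁`. -/
def EqModN (f h : UniversalEnvelopingAlgebra ℂ L) : Prop :=
  ∃ A B : UniversalEnvelopingAlgebra ℂ L, f - h = A * ιU g.E10 + B * ιU g.E01

end G2Gens

/-! The congruences hold for a stronger reason: `(F₃₁^n)_L` already maps `b` (for `n = 2`) and
`c` (for `n = 3`) into the left ideal `U(𝔤)𝔫₊`, which `(E₁₀)_L` preserves since `E₁₀ ∈ 𝔫₊`.
As `(F₃₁)_L` is a derivation, the Leibniz rule and the brackets of `F₃₁` with the root vectors give
`(F₃₁²)_L b = 2 (E₀₁F₂₁ − F₃₁E₁₁)` and a similar expression for `(F₃₁³)_L c`; each of their terms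
lies in `U(𝔤)𝔫₊` because `X f ≡ X_L f` modulo `U(𝔤)𝔫₊` for `X ∈ 𝔫₊`.
Finally `[E₁₀, [F₃₁, E₂₁]] = [E₁₀, F₁₀] = H₁₀`, so `C₁ = 1`. -/

section UniversalEnveloping

variable {L : Type*} [LieRing L] [LieAlgebra ℂ L]

lemma lie_lie_eq_add_smul {h x y : L} {a b : ℂ} (hx : ⁅h, x⁆ = a • x) (hy : ⁅h, y⁆ = b • y) :
    ⁅h, ⁅x, y⁆⁆ = (a + b) • ⁅x, y⁆ := by
  rw [leibniz_lie, hx, hy, smul_lie, lie_smul, add_smul]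

lemma ιU_smul (r : ℂ) (x : L) : ιU (r • x) = r • ιU x := map_smul _ r x

lemma ιU_neg (x : L) : ιU (-x) = -ιU x := map_neg _ x

lemma ιU_zero : ιU (0 : L) = 0 := map_zero _

lemma ιU_lie (x y : L) : ιU ⁅x, y⁆ = ιU x * ιU y - ιU y * ιU x := by
  let _ : LieRing (UniversalEnvelopingAlgebra ℂ L) := LieRing.ofAssociativeRing
  exact (UniversalEnvelopingAlgebra.ι ℂ).map_lie x y

lemma adU_ιU (x y : L) : adU x (ιU y) = ιU ⁅x, y⁆ := (ιU_lie x y).symm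

lemma adU_mul (x : L) (f h : UniversalEnvelopingAlgebra ℂ L) :
    adU x (f * h) = adU x f * h + f * adU x h := by
  simp only [adU]; noncomm_ring

lemma adU_add (x : L) (f h : UniversalEnvelopingAlgebra ℂ L) :
    adU x (f + h) = adU x f + adU x h := by
  simp only [adU]; noncomm_ring

lemma adU_sub (x : L) (f h : UniversalEnvelopingAlgebra ℂ L) :
    adU x (f - h) = adU x f - adU x h := by
  simp only [adU]; noncomm_ring

lemma adU_neg (x : L) (f : UniversalEnvelopingAlgebra ℂ L) : adU x (-f) = -adU x f := by
  simp only [adU]; noncomm_ring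

lemma adU_smul (x : L) (r : ℂ) (f : UniversalEnvelopingAlgebra ℂ L) :
    adU x (r • f) = r • adU x f := by
  simp only [adU, mul_smul_comm, smul_mul_assoc, smul_sub]

lemma adU_zero (x : L) : adU x (0 : UniversalEnvelopingAlgebra ℂ L) = 0 := by
  simp [adU]

variable {I : Ideal (UniversalEnvelopingAlgebra ℂ L)}

lemma ιU_lie_mem {x y : L} (hx : ιU x ∈ I) (hy : ιU y ∈ I) : ιU ⁅x, y⁆ ∈ I := by
  rw [ιU_lie]
  exact I.sub_mem (I.mul_mem_left _ hy) (I.mul_mem_left _ hx)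

lemma ιU_mul_mem_iff {a : L} (ha : ιU a ∈ I) (f : UniversalEnvelopingAlgebra ℂ L) :
    ιU a * f ∈ I ↔ adU a f ∈ I := by
  rw [adU, I.sub_mem_iff_left (I.mul_mem_left f ha)]

lemma adU_mem {a : L} (ha : ιU a ∈ I) {f : UniversalEnvelopingAlgebra ℂ L} (hf : f ∈ I) :
    adU a f ∈ I :=
  (ιU_mul_mem_iff ha f).1 (I.mul_mem_left _ hf)

lemma iterate_adU_mem {a : L} (ha : ιU a ∈ I) (n : ℕ) {f : UniversalEnvelopingAlgebra ℂ L}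
    (hf : f ∈ I) : (adU a)^[n] f ∈ I := by
  induction n with
  | zero => exact hf
  | succ n ih => rw [Function.iterate_succ_apply']; exact adU_mem ha ih

end UniversalEnveloping

namespace G2Gens

variable {L : Type*} [LieRing L] [LieAlgebra ℂ L] (g : G2Gens L)

lemma lie_H10_F11 : ⁅g.H10, g.F11⁆ = g.F11 := by
  rw [F11, lie_lie_eq_add_smul g.hH10F01 g.hH10F10]; norm_num

lemma lie_H01_F11 : ⁅g.H01, g.F11⁆ = -g.F11 := by
  rw [F11, lie_lie_eq_add_smul g.hH01F01 g.hH01F10]; norm_num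

lemma lie_H10_F21 : ⁅g.H10, g.F21⁆ = -g.F21 := by
  rw [F21, lie_smul, lie_lie_eq_add_smul g.hH10F10 (b := 1) (by rw [lie_H10_F11, one_smul]),
    smul_comm]
  norm_num

lemma lie_H01_F21 : ⁅g.H01, g.F21⁆ = 0 := by
  rw [F21, lie_smul,
    lie_lie_eq_add_smul g.hH01F10 (b := -1) (by rw [lie_H01_F11, neg_one_smul])]
  norm_num

lemma lie_H10_F31 : ⁅g.H10, g.F31⁆ = (-3 : ℂ) • g.F31 := by
  rw [F31, lie_smul,
    lie_lie_eq_add_smul g.hH10F10 (b := -1) (by rw [lie_H10_F21, neg_one_smul]), smul_comm]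
  norm_num

lemma lie_H01_F31 : ⁅g.H01, g.F31⁆ = g.F31 := by
  rw [F31, lie_smul, lie_lie_eq_add_smul g.hH01F10 (b := 0) (by rw [lie_H01_F21, zero_smul]),
    smul_comm]
  norm_num

lemma lie_F10_F01 : ⁅g.F10, g.F01⁆ = -g.F11 := by rw [← lie_skew]; rfl

lemma lie_F10_F11 : ⁅g.F10, g.F11⁆ = (2 : ℂ) • g.F21 := by
  rw [F21, smul_smul]; norm_num

lemma lie_F10_F21 : ⁅g.F10, g.F21⁆ = (3 : ℂ) • g.F31 := by
  rw [F31, smul_smul]; norm_num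

lemma lie_E10_F11 : ⁅g.E10, g.F11⁆ = (-3 : ℂ) • g.F01 := by
  rw [F11, leibniz_lie, g.hE10F01, g.hE10F10, zero_lie, zero_add, ← lie_skew, g.hH10F01,
    neg_smul]

lemma lie_E10_F21 : ⁅g.E10, g.F21⁆ = (2 : ℂ) • g.F11 := by
  rw [F21, lie_smul, leibniz_lie, g.hE10F10, lie_H10_F11, lie_E10_F11, lie_smul, lie_F10_F01]
  module

lemma lie_E10_F31 : ⁅g.E10, g.F31⁆ = g.F21 := by
  rw [F31, lie_smul, leibniz_lie, g.hE10F10, lie_H10_F21, lie_E10_F21, lie_smul, lie_F10_F11]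
  module

lemma lie_E01_F11 : ⁅g.E01, g.F11⁆ = g.F10 := by
  rw [F11, leibniz_lie, g.hE01F01, g.hE01F10, g.hH01F10, lie_zero, add_zero, one_smul]

lemma lie_E01_F21 : ⁅g.E01, g.F21⁆ = 0 := by
  rw [F21, lie_smul, leibniz_lie, g.hE01F10, lie_E01_F11, zero_lie, lie_self, add_zero,
    smul_zero]

lemma lie_E01_F31 : ⁅g.E01, g.F31⁆ = 0 := by
  rw [F31, lie_smul, leibniz_lie, g.hE01F10, lie_E01_F21, zero_lie, lie_zero, add_zero,
    smul_zero]

lemma lie_E01_F32 : ⁅g.E01, g.F32⁆ = g.F31 := by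
  rw [F32, leibniz_lie, g.hE01F01, lie_H01_F31, lie_E01_F31, lie_zero, add_zero]

lemma lie_E11_F11 : ⁅g.E11, g.F11⁆ = g.H11 := by
  rw [E11, lie_lie, lie_E01_F11, g.hE10F10, lie_E10_F11, lie_smul, g.hE01F01, H11]
  module

lemma lie_E11_F21 : ⁅g.E11, g.F21⁆ = (-2 : ℂ) • g.F10 := by
  rw [E11, lie_lie, lie_E01_F21, lie_E10_F21, lie_smul, lie_E01_F11, lie_zero, zero_sub,
    neg_smul]

lemma lie_E11_F31 : ⁅g.E11, g.F31⁆ = 0 := by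
  rw [E11, lie_lie, lie_E01_F31, lie_E10_F31, lie_E01_F21, lie_zero, sub_zero]

lemma lie_E21_F21 : ⁅g.E21, g.F21⁆ = g.H21 := by
  rw [E21, smul_lie, lie_lie, lie_E10_F21, lie_E11_F21, lie_smul, lie_smul, lie_E11_F11,
    g.hE10F10, H11, H21]
  module

lemma lie_E21_F31 : ⁅g.E21, g.F31⁆ = -g.F10 := by
  rw [E21, smul_lie, lie_lie, lie_E10_F31, lie_E11_F31, lie_E11_F21, lie_zero, sub_zero]
  module

lemma lie_E31_F31 : ⁅g.E31, g.F31⁆ = g.H31 := by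
  rw [E31, smul_lie, lie_lie, lie_E10_F31, lie_E21_F31, lie_E21_F21, lie_neg, g.hE10F10, H21,
    H31]
  module

lemma lie_E01_H31 : ⁅g.E01, g.H31⁆ = g.E01 := by
  rw [H31, lie_add, ← lie_skew, g.hH10E01, ← lie_skew, g.hH01E01]
  module

lemma lie_E32_F31 : ⁅g.E32, g.F31⁆ = -g.E01 := by
  rw [E32, lie_lie, lie_E01_F31, lie_E31_F31, lie_E01_H31, lie_zero, zero_sub]

lemma lie_F10_F31 : ⁅g.F10, g.F31⁆ = 0 := by
  have h := g.serreF1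
  simp only [lie_F10_F01, lie_neg, lie_F10_F11, lie_smul, lie_F10_F21, neg_eq_zero,
    smul_smul] at h
  exact (smul_eq_zero_iff_right (by norm_num)).1 h

lemma lie_F01_F11 : ⁅g.F01, g.F11⁆ = 0 := g.serreF2

lemma lie_F01_F21 : ⁅g.F01, g.F21⁆ = 0 := by
  rw [F21, lie_smul, leibniz_lie, ← F11, lie_self, zero_add, lie_F01_F11, lie_zero,
    smul_zero]

lemma lie_F11_F21 : ⁅g.F11, g.F21⁆ = (3 : ℂ) • g.F32 := by
  rw [F11, lie_lie, lie_F10_F21, lie_F01_F21, lie_zero, sub_zero, lie_smul, F32]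

lemma lie_F11_F31 : ⁅g.F11, g.F31⁆ = 0 := by
  have h₁ : ⁅g.F11, g.F31⁆ = ⁅g.F10, g.F32⁆ := by
    rw [F31, lie_smul, leibniz_lie, ← lie_skew g.F11 g.F10, lie_F10_F11, lie_F11_F21, neg_lie,
      smul_lie, lie_self, lie_smul]
    module
  have h₂ : ⁅g.F10, g.F32⁆ = -⁅g.F11, g.F31⁆ := by
    rw [F32, leibniz_lie, lie_F10_F01, lie_F10_F31, lie_zero, add_zero, neg_lie]
  have h : ⁅g.F11, g.F31⁆ = -⁅g.F11, g.F31⁆ := h₁.trans h₂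
  have h2 : (2 : ℂ) • ⁅g.F11, g.F31⁆ = 0 := by
    rw [two_smul]; nth_rw 1 [h]; exact neg_add_cancel _
  exact (smul_eq_zero_iff_right two_ne_zero).1 h2

lemma lie_F21_F31 : ⁅g.F21, g.F31⁆ = 0 := by
  rw [F21, smul_lie, lie_lie, lie_F11_F31, lie_F10_F31, lie_zero, lie_zero, sub_zero,
    smul_zero]

lemma lie_F31_F32 : ⁅g.F31, g.F32⁆ = 0 := by
  have h : (3 : ℂ) • ⁅g.F31, g.F32⁆ = 0 := by
    rw [← lie_smul, ← lie_F11_F21, leibniz_lie, ← lie_skew g.F31 g.F11, lie_F11_F31,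
      ← lie_skew g.F31 g.F21, lie_F21_F31, neg_zero, zero_lie, lie_zero, add_zero]
  exact (smul_eq_zero_iff_right (by norm_num)).1 h

lemma lie_F31_E10 : ⁅g.F31, g.E10⁆ = -g.F21 := by rw [← lie_skew, lie_E10_F31]

lemma lie_F31_E01 : ⁅g.F31, g.E01⁆ = 0 := by rw [← lie_skew, lie_E01_F31, neg_zero]

lemma lie_F31_E11 : ⁅g.F31, g.E11⁆ = 0 := by rw [← lie_skew, lie_E11_F31, neg_zero]

lemma lie_F31_E21 : ⁅g.F31, g.E21⁆ = g.F10 := by rw [← lie_skew, lie_E21_F31, neg_neg]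

lemma lie_F31_E31 : ⁅g.F31, g.E31⁆ = -g.H31 := by rw [← lie_skew, lie_E31_F31]

lemma lie_F31_E32 : ⁅g.F31, g.E32⁆ = g.E01 := by rw [← lie_skew, lie_E32_F31, neg_neg]

lemma lie_F31_H01 : ⁅g.F31, g.H01⁆ = -g.F31 := by rw [← lie_skew, lie_H01_F31]

lemma lie_F31_H31 : ⁅g.F31, g.H31⁆ = (2 : ℂ) • g.F31 := by
  rw [H31, lie_add, ← lie_skew, lie_H10_F31, ← lie_skew, lie_H01_F31]
  module

lemma lie_F31_F01 : ⁅g.F31, g.F01⁆ = -g.F32 := by rw [← lie_skew]; rfl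

lemma lie_F31_F21 : ⁅g.F31, g.F21⁆ = 0 := by rw [← lie_skew, lie_F21_F31, neg_zero]

lemma iterate_adU_F31_bU : (adU g.F31)^[2] g.bU =
    (2 : ℂ) • (ιU g.E01 * ιU g.F21 - ιU g.F31 * ιU g.E11) := by
  change adU g.F31 (adU g.F31 g.bU) = _
  simp only [bU, adU_add, adU_sub, adU_mul, adU_neg, adU_ιU, lie_F31_E10, lie_F31_E01,
    lie_F31_E11, lie_F31_E31, lie_F31_E32, lie_F31_H31, lie_F31_F21, ιU_neg, ιU_smul, ιU_zero,
    neg_mul, mul_neg, zero_mul, mul_zero, add_zero, smul_mul_assoc]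
  module

lemma iterate_adU_F31_cU : (adU g.F31)^[3] g.cU = (6 : ℂ) •
    ((ιU g.F31 * ιU g.H31 + ιU g.H31 * ιU g.F31) * ιU g.E01
      + ιU g.E01 * ιU g.F31 * ιU g.H01 - ιU g.E32 * ιU g.F31 * ιU g.F31
      - ιU g.E01 * ιU g.H31 * ιU g.F31 + ιU g.E01 * ιU g.E01 * ιU g.F32) := by
  change adU g.F31 (adU g.F31 (adU g.F31 g.cU)) = _
  simp only [cU, adU_add, adU_sub, adU_mul, adU_neg, adU_smul, adU_zero, adU_ιU, lie_F31_E01,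
    lie_F31_E31, lie_F31_E32, lie_F31_H01, lie_F31_H31, lie_F31_F01, lie_F31_F32, lie_self,
    ιU_neg, ιU_smul, ιU_zero, neg_mul, mul_neg, zero_mul, mul_zero, add_zero, smul_mul_assoc,
    mul_smul_comm, add_mul, mul_add, mul_assoc]
  module

def nPlusIdeal : Ideal (UniversalEnvelopingAlgebra ℂ L) := Ideal.span {ιU g.E10, ιU g.E01}

lemma eqModN_zero_iff (f : UniversalEnvelopingAlgebra ℂ L) :
    g.EqModN f 0 ↔ f ∈ g.nPlusIdeal := by
  simp only [EqModN, sub_zero, nPlusIdeal, Ideal.mem_span_pair, eq_comm]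

lemma ιU_E10_mem : ιU g.E10 ∈ g.nPlusIdeal := Ideal.subset_span (by simp)

lemma ιU_E01_mem : ιU g.E01 ∈ g.nPlusIdeal := Ideal.subset_span (by simp)

lemma ιU_E11_mem : ιU g.E11 ∈ g.nPlusIdeal := ιU_lie_mem g.ιU_E10_mem g.ιU_E01_mem

lemma ιU_E21_mem : ιU g.E21 ∈ g.nPlusIdeal := by
  rw [E21, ιU_smul]
  exact Submodule.smul_of_tower_mem _ _ (ιU_lie_mem g.ιU_E11_mem g.ιU_E10_mem)

lemma ιU_E31_mem : ιU g.E31 ∈ g.nPlusIdeal := by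
  rw [E31, ιU_smul]
  exact Submodule.smul_of_tower_mem _ _ (ιU_lie_mem g.ιU_E21_mem g.ιU_E10_mem)

lemma ιU_E32_mem : ιU g.E32 ∈ g.nPlusIdeal := ιU_lie_mem g.ιU_E31_mem g.ιU_E01_mem

lemma ιU_E01_mul_ιU_F31_mem : ιU g.E01 * ιU g.F31 ∈ g.nPlusIdeal := by
  rw [ιU_mul_mem_iff g.ιU_E01_mem, adU_ιU, lie_E01_F31, ιU_zero]
  exact zero_mem _

lemma iterate_adU_F31_bU_mem : (adU g.F31)^[2] g.bU ∈ g.nPlusIdeal := by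
  rw [iterate_adU_F31_bU]
  refine Submodule.smul_of_tower_mem _ _ (sub_mem ?_ (Ideal.mul_mem_left _ _ g.ιU_E11_mem))
  rw [ιU_mul_mem_iff g.ιU_E01_mem, adU_ιU, lie_E01_F21, ιU_zero]
  exact zero_mem _

lemma iterate_adU_F31_cU_mem : (adU g.F31)^[3] g.cU ∈ g.nPlusIdeal := by
  rw [iterate_adU_F31_cU]
  refine Submodule.smul_of_tower_mem _ _
    (add_mem (sub_mem (sub_mem (add_mem ?_ ?_) ?_) ?_) ?_)
  · exact Ideal.mul_mem_left _ _ g.ιU_E01_mem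
  · rw [mul_assoc, ιU_mul_mem_iff g.ιU_E01_mem, adU_mul, adU_ιU, adU_ιU, lie_E01_F31, ιU_zero,
      zero_mul, zero_add, ← lie_skew, g.hH01E01, ιU_neg, ιU_smul, mul_neg, mul_smul_comm]
    exact neg_mem (Submodule.smul_of_tower_mem _ _ (Ideal.mul_mem_left _ _ g.ιU_E01_mem))
  · rw [mul_assoc, ιU_mul_mem_iff g.ιU_E32_mem, adU_mul, adU_ιU, lie_E32_F31, ιU_neg, neg_mul,
      mul_neg]
    exact add_mem (neg_mem g.ιU_E01_mul_ιU_F31_mem) (neg_mem (Ideal.mul_mem_left _ _ g.ιU_E01_mem))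
  · rw [mul_assoc, ιU_mul_mem_iff g.ιU_E01_mem, adU_mul, adU_ιU, adU_ιU, lie_E01_H31, lie_E01_F31,
      ιU_zero, mul_zero, add_zero]
    exact g.ιU_E01_mul_ιU_F31_mem
  · rw [mul_assoc, ιU_mul_mem_iff g.ιU_E01_mem, adU_mul, adU_ιU, adU_ιU, lie_self, lie_E01_F32,
      ιU_zero, zero_mul, zero_add]
    exact g.ιU_E01_mul_ιU_F31_mem

end G2Gens

/-- **Lemma A.5, second family (lem-secondstep).**  Congruences in `U(𝔤)` modulo `U(𝔤)𝔫₊`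
for the operators `(E₁₀^n F₃₁^n)_L` applied to `a`, `b`, `c`. -/
theorem G2Gens.E10F31_congruences
    {L : Type*} [LieRing L] [LieAlgebra ℂ L] (g : G2Gens L) :
    (∃ C₁ : ℚ, C₁ ≠ 0 ∧ adU g.E10 (adU g.F31 g.aU) = (C₁ : ℂ) • ιU g.H10) ∧
    g.EqModN ((adU g.E10)^[2] ((adU g.F31)^[2] g.bU)) 0 ∧
    g.EqModN ((adU g.E10)^[3] ((adU g.F31)^[3] g.cU)) 0 := by
  refine ⟨⟨1, one_ne_zero, ?_⟩, ?_, ?_⟩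
  · rw [aU, adU_ιU, g.lie_F31_E21, adU_ιU, g.hE10F10, Rat.cast_one, one_smul]
  · rw [g.eqModN_zero_iff]
    exact iterate_adU_mem g.ιU_E10_mem 2 g.iterate_adU_F31_bU_mem
  · rw [g.eqModN_zero_iff]
    exact iterate_adU_mem g.ιU_E10_mem 3 g.iterate_adU_F31_cU_mem
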